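/- arXiv:2407.11035 — 2 statements merged into one kernel-verified Lean document; each statement's English description precedes it below -/
import Mathlib

section
/- Let M : ℝ^d → ℝ be in the Hölder class H_{α} with constant M_α, meaning |M(x) - ∑_{0 ≤ |ı|₁ ≤ α-1} D^(ı)M(y)(x-y)^ı / ı!| ≤ M_α ‖x-y‖^α for all x, y. Let β₁,…,β_L ∈ ℝ and C₁,…,C_L ∈ ℝ satisfy ∑_{ℓ=1}^L C_ℓ β_ℓ^r = 0 for r = 0, 1, …, α-1. Then for every x, h-vector h ∈ ℝ^d and v ∈ ℝ^d, |∑_{ℓ=1}^L C_ℓ M(x + β_ℓ (h ⊙ v))| ≤ M_α (∑_{ℓ=1}^L |C_ℓ| |β_ℓ|^α) ‖h ⊙ v‖^α, where h ⊙ v denotes the componentwise product. -/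
open Finset

/-- If `M` lies in the Hölder class `H_α` (its Taylor polynomial of degree `α-1`, with
weak partial derivatives `D`, approximates it to order `‖x-y‖^α` with constant `Mα`) and
the coefficients satisfy `∑_ℓ C_ℓ β_ℓ^r = 0` for `r = 0,…,α-1`, then the centered linear
combination `∑_ℓ C_ℓ M(x + β_ℓ (h ⊙ v))` is bounded by
`Mα (∑_ℓ |C_ℓ| |β_ℓ|^α) ‖h ⊙ v‖^α`. -/
theorem holder_centered_combination_bound
    {d : ℕ} (M : EuclideanSpace ℝ (Fin d) → ℝ)
    (D : (Fin d → ℕ) → EuclideanSpace ℝ (Fin d) → ℝ)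
    (α : ℕ) (hα : 1 ≤ α) (Mα : ℝ)
    (hHolder : ∀ x y : EuclideanSpace ℝ (Fin d),
      |M x - ∑ p ∈ Finset.range α, ∑ iv ∈ Finset.piAntidiag Finset.univ p,
          D iv y * (∏ k, (x k - y k) ^ iv k) / ∏ k, (Nat.factorial (iv k) : ℝ)|
        ≤ Mα * ‖x - y‖ ^ α)
    {L : ℕ} (C β : Fin L → ℝ)
    (hconstr : ∀ r < α, ∑ ℓ, C ℓ * β ℓ ^ r = 0)
    (x : EuclideanSpace ℝ (Fin d)) (h v : Fin d → ℝ) :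
    |∑ ℓ, C ℓ * M (x + β ℓ • (WithLp.equiv 2 (Fin d → ℝ)).symm fun k => h k * v k)|
      ≤ Mα * (∑ ℓ, |C ℓ| * |β ℓ| ^ α) *
        ‖(WithLp.equiv 2 (Fin d → ℝ)).symm fun k => h k * v k‖ ^ α := by
  set w : EuclideanSpace ℝ (Fin d) :=
    (WithLp.equiv 2 (Fin d → ℝ)).symm fun k => h k * v k with hw
  set T : Fin L → ℝ := fun ℓ => ∑ p ∈ Finset.range α, ∑ iv ∈ Finset.piAntidiag Finset.univ p,
      D iv x * (∏ k, ((x + β ℓ • w) k - x k) ^ iv k) / ∏ k, (Nat.factorial (iv k) : ℝ) with hT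
  have hcoord : ∀ ℓ k, (x + β ℓ • w) k - x k = β ℓ * (h k * v k) := by
    intro ℓ k
    have : w k = h k * v k := rfl
    simp [PiLp.add_apply, PiLp.smul_apply, this, smul_eq_mul]
  have hTeq : ∀ ℓ, T ℓ = ∑ p ∈ Finset.range α, (β ℓ) ^ p *
      ∑ iv ∈ Finset.piAntidiag Finset.univ p,
        D iv x * (∏ k, (h k * v k) ^ iv k) / ∏ k, (Nat.factorial (iv k) : ℝ) := by
    intro ℓ
    rw [hT]
    refine Finset.sum_congr rfl fun p hp => ?_
    rw [Finset.mul_sum]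
    refine Finset.sum_congr rfl fun iv hiv => ?_
    have hsum : ∑ k, iv k = p := (Finset.mem_piAntidiag.mp hiv).1
    have hprod : (∏ k, ((x + β ℓ • w) k - x k) ^ iv k)
        = β ℓ ^ p * ∏ k, (h k * v k) ^ iv k := by
      calc (∏ k, ((x + β ℓ • w) k - x k) ^ iv k)
          = ∏ k, (β ℓ ^ iv k * (h k * v k) ^ iv k) := by
            refine Finset.prod_congr rfl fun k _ => ?_
            rw [hcoord, mul_pow]
        _ = (∏ k, β ℓ ^ iv k) * ∏ k, (h k * v k) ^ iv k := Finset.prod_mul_distrib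
        _ = β ℓ ^ p * ∏ k, (h k * v k) ^ iv k := by
            rw [Finset.prod_pow_eq_pow_sum, hsum]
    rw [hprod]; ring
  have hTzero : ∑ ℓ, C ℓ * T ℓ = 0 := by
    have : ∑ ℓ, C ℓ * T ℓ = ∑ p ∈ Finset.range α,
        (∑ iv ∈ Finset.piAntidiag Finset.univ p,
          D iv x * (∏ k, (h k * v k) ^ iv k) / ∏ k, (Nat.factorial (iv k) : ℝ))
          * ∑ ℓ, C ℓ * β ℓ ^ p := by
      simp only [hTeq, Finset.mul_sum]
      rw [Finset.sum_comm]
      refine Finset.sum_congr rfl fun p _ => ?_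
      refine Finset.sum_congr rfl fun ℓ _ => ?_
      rw [Finset.sum_mul]
      exact Finset.sum_congr rfl fun iv _ => by ring
    rw [this]
    refine Finset.sum_eq_zero fun p hp => ?_
    rw [hconstr p (Finset.mem_range.mp hp), mul_zero]
  have key : ∀ ℓ, |M (x + β ℓ • w) - T ℓ| ≤ Mα * (|β ℓ| ^ α * ‖w‖ ^ α) := by
    intro ℓ
    have hb := hHolder (x + β ℓ • w) x
    have hnorm : ‖x + β ℓ • w - x‖ = |β ℓ| * ‖w‖ := by
      rw [add_sub_cancel_left, norm_smul, Real.norm_eq_abs]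
    rw [hnorm, mul_pow] at hb
    exact hb
  calc |∑ ℓ, C ℓ * M (x + β ℓ • w)|
      = |∑ ℓ, C ℓ * (M (x + β ℓ • w) - T ℓ)| := by
        simp only [mul_sub, Finset.sum_sub_distrib, hTzero, sub_zero]
    _ ≤ ∑ ℓ, |C ℓ * (M (x + β ℓ • w) - T ℓ)| := Finset.abs_sum_le_sum_abs _ _
    _ = ∑ ℓ, |C ℓ| * |M (x + β ℓ • w) - T ℓ| := by
        simp only [abs_mul]
    _ ≤ ∑ ℓ, |C ℓ| * (Mα * (|β ℓ| ^ α * ‖w‖ ^ α)) := by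
        refine Finset.sum_le_sum fun ℓ _ => ?_
        exact mul_le_mul_of_nonneg_left (key ℓ) (abs_nonneg _)
    _ = Mα * (∑ ℓ, |C ℓ| * |β ℓ| ^ α) * ‖w‖ ^ α := by
        rw [Finset.mul_sum, Finset.sum_mul]
        refine Finset.sum_congr rfl fun ℓ _ => ?_
        ring
end

section
/- Let M ∈ H_{r*+1} with constant M_{r*+1}, and let C₁,…,C_L, β₁,…,β_L satisfy ∑_ℓ C_ℓ β_ℓ^r = 0 for r = 0,…,r*. Let V₁,…,V_d be i.i.d. uniform on (-ξ,ξ), σ² = ξ²/3, h_k > 0, u ⊆ {1,…,d} nonempty. Then Var[(∑_{ℓ=1}^L C_ℓ M(x + β_ℓ h ⊙ V)) ∏_{k∈u} V_k/(h_k σ²)] ≤ 3^{|u|} M_{r*+1}² (∑_ℓ |C_ℓ β_ℓ^{r*+1}|)² ξ^{-2(|u|-r*-1)} (∏_{k∈u} h_k^{-2}) ‖h‖^{2(r*+1)}. -/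
/-!
Since the coefficients `C_ℓ` annihilate `β^0, …, β^{r*}`, they annihilate the order-`r*` Taylor
polynomial of `M` at `x` evaluated along the ray `x + β_ℓ w`, so `∑_ℓ C_ℓ M(x + β_ℓ w)` is a
combination of Taylor remainders and is bounded by `M_{r*+1} (∑_ℓ |C_ℓ β_ℓ^{r*+1}|) ‖w‖^{r*+1}`.
With `w = h ⊙ V` and `|V_k| < ξ` this is deterministic, so the variance is at most the second
moment, which factors by independence into `∏_{k∈u} E[V_k²] / (h_k σ²)² = ∏_{k∈u} 3 / (h_k² ξ²)`.
-/

open MeasureTheory ProbabilityTheory Finset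

theorem norm_toLp_mul_le {ι : Type*} [Fintype ι] (h : EuclideanSpace ℝ ι) {v : ι → ℝ} {ξ : ℝ}
    (hξ : 0 ≤ ξ) (hv : ∀ k, |v k| ≤ ξ) :
    ‖(WithLp.equiv 2 (ι → ℝ)).symm (fun k => h k * v k)‖ ≤ ξ * ‖h‖ := by
  rw [EuclideanSpace.norm_eq, EuclideanSpace.norm_eq, ← Real.sqrt_sq hξ,
    ← Real.sqrt_mul (sq_nonneg ξ), mul_sum]
  refine Real.sqrt_le_sqrt (sum_le_sum fun k _ => ?_)
  simp only [WithLp.equiv_symm_apply, PiLp.toLp_apply, Real.norm_eq_abs, abs_mul, mul_pow]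
  rw [mul_comm]
  gcongr
  exact hv k

noncomputable section Taylor

variable {ι : Type*} [Fintype ι] [DecidableEq ι]

def mvTaylorTerm (D : (ι → ℕ) → EuclideanSpace ℝ ι → ℝ) (y w : EuclideanSpace ℝ ι) (p : ℕ) :
    ℝ :=
  ∑ iv ∈ piAntidiag univ p, D iv y * (∏ k, w k ^ iv k) / ∏ k, ((iv k).factorial : ℝ)

def mvTaylorPoly (D : (ι → ℕ) → EuclideanSpace ℝ ι → ℝ) (n : ℕ) (y x : EuclideanSpace ℝ ι) :
    ℝ :=
  ∑ p ∈ range (n + 1), ∑ iv ∈ piAntidiag univ p,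
    D iv y * (∏ k, (x k - y k) ^ iv k) / ∏ k, ((iv k).factorial : ℝ)

/-- The Hölder class `H_{n+1}` with constant `K`; `D iv y` plays the role of `∂^iv M (y)`. -/
def HasTaylorRemainderBound (M : EuclideanSpace ℝ ι → ℝ)
    (D : (ι → ℕ) → EuclideanSpace ℝ ι → ℝ) (n : ℕ) (K : ℝ) : Prop :=
  ∀ x y, |M x - mvTaylorPoly D n y x| ≤ K * ‖x - y‖ ^ (n + 1)

variable {D : (ι → ℕ) → EuclideanSpace ℝ ι → ℝ} {n : ℕ}

theorem mvTaylorPoly_add_smul (y w : EuclideanSpace ℝ ι) (t : ℝ) :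
    mvTaylorPoly D n y (y + t • w) = ∑ p ∈ range (n + 1), t ^ p * mvTaylorTerm D y w p := by
  refine sum_congr rfl fun p _ => ?_
  rw [mvTaylorTerm, mul_sum]
  refine sum_congr rfl fun iv hiv => ?_
  have hcoord : ∀ k, (y + t • w) k - y k = t * w k := fun k => by simp
  simp_rw [hcoord, mul_pow, prod_mul_distrib, prod_pow_eq_pow_sum, (mem_piAntidiag.1 hiv).1]
  ring

theorem mvTaylorTerm_zero (y w : EuclideanSpace ℝ ι) : mvTaylorTerm D y w 0 = D 0 y := by
  simp [mvTaylorTerm]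

theorem mvTaylorPoly_self (y : EuclideanSpace ℝ ι) : mvTaylorPoly D n y y = D 0 y := by
  simpa [mvTaylorTerm_zero, zero_pow_eq] using mvTaylorPoly_add_smul (D := D) (n := n) y 0 0

theorem continuous_mvTaylorPoly (y : EuclideanSpace ℝ ι) : Continuous (mvTaylorPoly D n y) := by
  unfold mvTaylorPoly
  fun_prop

theorem sum_mul_mvTaylorPoly_add_smul_eq_zero {L : ℕ} {C β : Fin L → ℝ}
    (hCβ : ∀ r ≤ n, ∑ ℓ, C ℓ * β ℓ ^ r = 0) (x w : EuclideanSpace ℝ ι) :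
    ∑ ℓ, C ℓ * mvTaylorPoly D n x (x + β ℓ • w) = 0 := by
  simp_rw [mvTaylorPoly_add_smul, mul_sum]
  rw [sum_comm]
  refine sum_eq_zero fun p hp => ?_
  simp_rw [← mul_assoc, ← sum_mul, hCβ p (Nat.lt_succ_iff.1 (mem_range.1 hp)), zero_mul]

variable {M : EuclideanSpace ℝ ι → ℝ} {K : ℝ}

theorem HasTaylorRemainderBound.continuous (hM : HasTaylorRemainderBound M D n K) :
    Continuous M := by
  refine continuous_iff_continuousAt.2 fun y => ?_
  have hMy : M y = D 0 y := by simpa [mvTaylorPoly_self, sub_eq_zero] using hM y y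
  have hrem : Filter.Tendsto (fun x => M x - mvTaylorPoly D n y x) (nhds y) (nhds 0) := by
    refine squeeze_zero_norm (fun x => hM x y) ?_
    simpa using ((continuous_id.sub (continuous_const (y := y))).norm.pow (n + 1)).const_mul K
      |>.tendsto y
  show Filter.Tendsto M (nhds y) (nhds (M y))
  simpa [mvTaylorPoly_self, ← hMy] using
    hrem.add (continuous_mvTaylorPoly (D := D) (n := n) y).continuousAt

theorem HasTaylorRemainderBound.abs_sum_mul_le (hM : HasTaylorRemainderBound M D n K)
    {L : ℕ} {C β : Fin L → ℝ} (hCβ : ∀ r ≤ n, ∑ ℓ, C ℓ * β ℓ ^ r = 0)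
    (x w : EuclideanSpace ℝ ι) :
    |∑ ℓ, C ℓ * M (x + β ℓ • w)| ≤ K * (∑ ℓ, |C ℓ * β ℓ ^ (n + 1)|) * ‖w‖ ^ (n + 1) := by
  have hsplit : ∑ ℓ, C ℓ * M (x + β ℓ • w)
      = ∑ ℓ, C ℓ * (M (x + β ℓ • w) - mvTaylorPoly D n x (x + β ℓ • w)) := by
    simp_rw [mul_sub, sum_sub_distrib, sum_mul_mvTaylorPoly_add_smul_eq_zero hCβ, sub_zero]
  calc |∑ ℓ, C ℓ * M (x + β ℓ • w)|
      ≤ ∑ ℓ, |C ℓ| * |M (x + β ℓ • w) - mvTaylorPoly D n x (x + β ℓ • w)| := by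
        rw [hsplit]
        simpa only [abs_mul] using abs_sum_le_sum_abs
          (fun ℓ => C ℓ * (M (x + β ℓ • w) - mvTaylorPoly D n x (x + β ℓ • w))) univ
    _ ≤ ∑ ℓ, |C ℓ| * (K * ‖β ℓ • w‖ ^ (n + 1)) := by
        gcongr with ℓ
        have := hM (x + β ℓ • w) x
        rwa [add_sub_cancel_left] at this
    _ = K * (∑ ℓ, |C ℓ * β ℓ ^ (n + 1)|) * ‖w‖ ^ (n + 1) := by
        rw [mul_sum, sum_mul]
        simp_rw [norm_smul, Real.norm_eq_abs, abs_mul, abs_pow, mul_pow]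
        exact sum_congr rfl fun _ _ => by ring

theorem HasTaylorRemainderBound.sq_sum_mul_le (hM : HasTaylorRemainderBound M D n K)
    {L : ℕ} {C β : Fin L → ℝ} (hCβ : ∀ r ≤ n, ∑ ℓ, C ℓ * β ℓ ^ r = 0)
    {x w : EuclideanSpace ℝ ι} {R : ℝ} (hw : ‖w‖ ≤ R) :
    (∑ ℓ, C ℓ * M (x + β ℓ • w)) ^ 2
      ≤ (K * ∑ ℓ, |C ℓ * β ℓ ^ (n + 1)|) ^ 2 * R ^ (2 * (n + 1)) := by
  calc (∑ ℓ, C ℓ * M (x + β ℓ • w)) ^ 2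
      ≤ (K * (∑ ℓ, |C ℓ * β ℓ ^ (n + 1)|) * ‖w‖ ^ (n + 1)) ^ 2 := by
        rw [← sq_abs]
        exact pow_le_pow_left₀ (abs_nonneg _) (hM.abs_sum_mul_le hCβ x w) 2
    _ ≤ (K * ∑ ℓ, |C ℓ * β ℓ ^ (n + 1)|) ^ 2 * R ^ (2 * (n + 1)) := by
        rw [mul_pow, pow_mul', ← pow_mul, ← pow_mul, mul_comm (n + 1)]
        gcongr

theorem HasTaylorRemainderBound.sq_mul_prod_div_le (hM : HasTaylorRemainderBound M D n K)
    {L : ℕ} {C β : Fin L → ℝ} (hCβ : ∀ r ≤ n, ∑ ℓ, C ℓ * β ℓ ^ r = 0)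
    {ξ : ℝ} (hξ : 0 ≤ ξ) (x h : EuclideanSpace ℝ ι) {v : ι → ℝ} (hv : ∀ k, |v k| ≤ ξ)
    (u : Finset ι) (c : ι → ℝ) :
    ((∑ ℓ, C ℓ * M (x + β ℓ • (WithLp.equiv 2 (ι → ℝ)).symm fun k => h k * v k))
        * ∏ k ∈ u, v k / c k) ^ 2
      ≤ (K * ∑ ℓ, |C ℓ * β ℓ ^ (n + 1)|) ^ 2 * (ξ * ‖h‖) ^ (2 * (n + 1))
        * ∏ k ∈ u, (v k / c k) ^ 2 := by
  rw [mul_pow, ← prod_pow]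
  exact mul_le_mul_of_nonneg_right (hM.sq_sum_mul_le hCβ (norm_toLp_mul_le h hξ hv))
    (prod_nonneg fun k _ => sq_nonneg _)

end Taylor

theorem ProbabilityTheory.iIndepFun.integral_finset_prod_comp {Ω ι : Type*} [MeasurableSpace Ω]
    {μ : Measure Ω} {V : ι → Ω → ℝ} (hV : iIndepFun V μ) (hm : ∀ i, AEMeasurable (V i) μ)
    {g : ι → ℝ → ℝ} (hg : ∀ i, Measurable (g i)) (s : Finset ι) :
    ∫ ω, ∏ i ∈ s, g i (V i ω) ∂μ = ∏ i ∈ s, ∫ ω, g i (V i ω) ∂μ := by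
  simp_rw [← prod_coe_sort s]
  exact (hV.precomp Subtype.val_injective).integral_fun_prod_comp (fun i => hm i)
    (fun i => (hg i).aestronglyMeasurable)

section Uniform

variable {Ω : Type*} [MeasurableSpace Ω] {μ : Measure Ω} {f : Ω → ℝ} {ξ : ℝ}

theorem ae_abs_le_of_map_eq_uniform (hf : AEMeasurable f μ)
    (hmap : μ.map f = (ENNReal.ofReal (2 * ξ))⁻¹ • volume.restrict (Set.Ioo (-ξ) ξ)) :
    ∀ᵐ ω ∂μ, |f ω| ≤ ξ := by
  have hout : μ (f ⁻¹' (Set.Ioo (-ξ) ξ)ᶜ) = 0 := by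
    rw [← Measure.map_apply_of_aemeasurable hf measurableSet_Ioo.compl, hmap]
    simp [Measure.restrict_apply measurableSet_Ioo.compl]
  filter_upwards [measure_eq_zero_iff_ae_notMem.1 hout] with ω hω
  simp only [Set.mem_preimage, Set.mem_compl_iff, not_not] at hω
  exact abs_le.2 ⟨hω.1.le, hω.2.le⟩

theorem integral_sq_of_map_eq_uniform (hξ : 0 < ξ) (hf : AEMeasurable f μ)
    (hmap : μ.map f = (ENNReal.ofReal (2 * ξ))⁻¹ • volume.restrict (Set.Ioo (-ξ) ξ)) :
    ∫ ω, f ω ^ 2 ∂μ = ξ ^ 2 / 3 := by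
  rw [← integral_map hf (continuous_pow 2).aestronglyMeasurable, hmap, integral_smul_measure,
    ← integral_Ioc_eq_integral_Ioo, ← intervalIntegral.integral_of_le (by linarith),
    integral_pow, ENNReal.toReal_inv, ENNReal.toReal_ofReal (by positivity), smul_eq_mul]
  field_simp
  ring

variable {ι : Type*} {V : ι → Ω → ℝ}

theorem integrable_prod_div_sq_of_map_eq_uniform [IsFiniteMeasure μ]
    (hV : ∀ k, AEMeasurable (V k) μ)
    (hmap : ∀ k, μ.map (V k) = (ENNReal.ofReal (2 * ξ))⁻¹ • volume.restrict (Set.Ioo (-ξ) ξ))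
    (c : ι → ℝ) (u : Finset ι) :
    Integrable (fun ω => ∏ k ∈ u, (V k ω / c k) ^ 2) μ := by
  refine .of_bound (by fun_prop) (∏ k ∈ u, (ξ / c k) ^ 2) ?_
  filter_upwards [u.eventually_all.2 fun k _ => ae_abs_le_of_map_eq_uniform (hV k)
    (hmap k)] with ω hω
  rw [Real.norm_eq_abs, abs_prod]
  refine prod_le_prod (fun _ _ => abs_nonneg _) fun k hk => ?_
  rw [abs_pow, abs_div, div_pow, div_pow, sq_abs, sq_abs]
  have := abs_le.1 (hω k hk)
  exact div_le_div_of_nonneg_right (sq_le_sq' this.1 this.2) (sq_nonneg _)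

theorem integral_prod_div_sq_of_map_eq_uniform (hξ : 0 < ξ) (hindep : iIndepFun V μ)
    (hV : ∀ k, AEMeasurable (V k) μ)
    (hmap : ∀ k, μ.map (V k) = (ENNReal.ofReal (2 * ξ))⁻¹ • volume.restrict (Set.Ioo (-ξ) ξ))
    (c : ι → ℝ) (u : Finset ι) :
    ∫ ω, ∏ k ∈ u, (V k ω / c k) ^ 2 ∂μ = ∏ k ∈ u, ξ ^ 2 / 3 / c k ^ 2 := by
  rw [hindep.integral_finset_prod_comp hV (g := fun k y => (y / c k) ^ 2) (fun k => by fun_prop)]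
  refine prod_congr rfl fun k _ => ?_
  simp_rw [div_pow, integral_div, integral_sq_of_map_eq_uniform hξ (hV k) (hmap k)]

end Uniform

theorem variance_bound_uniform_general
    {Ω : Type*} [MeasurableSpace Ω] (μ : Measure Ω) [IsProbabilityMeasure μ]
    {d : ℕ} (M : EuclideanSpace ℝ (Fin d) → ℝ)
    (D : (Fin d → ℕ) → EuclideanSpace ℝ (Fin d) → ℝ)
    (r' : ℕ) (Mr : ℝ)
    (hHolder : ∀ x y : EuclideanSpace ℝ (Fin d),
      |M x - ∑ p ∈ Finset.range (r' + 1), ∑ iv ∈ Finset.piAntidiag Finset.univ p,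
          D iv y * (∏ k, (x k - y k) ^ iv k) / ∏ k, (Nat.factorial (iv k) : ℝ)|
        ≤ Mr * ‖x - y‖ ^ (r' + 1))
    {L : ℕ} (C β : Fin L → ℝ)
    (hconstr : ∀ r ≤ r', ∑ ℓ, C ℓ * β ℓ ^ r = 0)
    (ξ : ℝ) (hξ : 0 < ξ) (V : Fin d → Ω → ℝ)
    (hVmeas : ∀ j, Measurable (V j))
    (hindep : iIndepFun V μ)
    (hunif : ∀ j, Measure.map (V j) μ =
      (ENNReal.ofReal (2 * ξ))⁻¹ • volume.restrict (Set.Ioo (-ξ) ξ))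
    (h : EuclideanSpace ℝ (Fin d))
    (u : Finset (Fin d))
    (x : EuclideanSpace ℝ (Fin d)) :
    variance (fun ω =>
        (∑ ℓ, C ℓ * M (x + β ℓ • (WithLp.equiv 2 (Fin d → ℝ)).symm fun k => h k * V k ω))
          * ∏ k ∈ u, V k ω / (h k * (ξ ^ 2 / 3))) μ
      ≤ (3 : ℝ) ^ u.card * Mr ^ 2 * (∑ ℓ, |C ℓ * β ℓ ^ (r' + 1)|) ^ 2
        * ξ ^ (-(2 * ((u.card : ℤ) - r' - 1)))
        * (∏ k ∈ u, (h k) ^ (-2 : ℤ)) * ‖h‖ ^ (2 * (r' + 1)) := by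
  have hM : HasTaylorRemainderBound M D r' Mr := hHolder
  have hV k : AEMeasurable (V k) μ := (hVmeas k).aemeasurable
  refine (variance_le_expectation_sq (Measurable.aestronglyMeasurable ?_)).trans ?_
  · have := hM.continuous
    have : Continuous (WithLp.equiv 2 (Fin d → ℝ)).symm := PiLp.continuous_toLp 2 _
    fun_prop
  have hξpow : ξ ^ (-(2 * ((u.card : ℤ) - r' - 1)))
      = ξ ^ (2 * (r' + 1)) * ((ξ ^ 2)⁻¹) ^ u.card := by
    rw [show -(2 * ((u.card : ℤ) - r' - 1)) = ((2 * (r' + 1) : ℕ) : ℤ) + (-2) * u.card by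
      push_cast; ring, zpow_add₀ hξ.ne', zpow_mul, zpow_natCast, zpow_natCast, zpow_neg,
      zpow_ofNat]
  have hfactor k : ξ ^ 2 / 3 / (h k * (ξ ^ 2 / 3)) ^ 2 = h k ^ (-2 : ℤ) * (3 / ξ ^ 2) := by
    rw [mul_pow, div_mul_eq_div_div_swap, zpow_neg, zpow_ofNat]
    field_simp
  calc _ ≤ ∫ ω, (Mr * ∑ ℓ, |C ℓ * β ℓ ^ (r' + 1)|) ^ 2 * (ξ * ‖h‖) ^ (2 * (r' + 1))
          * ∏ k ∈ u, (V k ω / (h k * (ξ ^ 2 / 3))) ^ 2 ∂μ := by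
        refine integral_mono_of_nonneg (ae_of_all _ fun _ => sq_nonneg _)
          ((integrable_prod_div_sq_of_map_eq_uniform hV hunif _ u).const_mul _) ?_
        filter_upwards [ae_all_iff.2 fun k => ae_abs_le_of_map_eq_uniform (hV k) (hunif k)]
          with ω hω
        exact hM.sq_mul_prod_div_le hconstr hξ.le x h hω u _
    _ = _ := by
        rw [integral_const_mul, integral_prod_div_sq_of_map_eq_uniform hξ hindep hV hunif,
          prod_congr rfl fun k _ => hfactor k, prod_mul_distrib, prod_const, hξpow]
        ring

/-- Variance bound for the randomized cross-partial-derivative estimator kernel: if `M`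
lies in the Hölder class `H_{r*+1}`, the coefficients annihilate all powers `β^r` for
`r = 0,…,r*`, and `V₁,…,V_d` are i.i.d. uniform on `(-ξ,ξ)` (so `σ² = ξ²/3`), then
`Var[(∑_ℓ C_ℓ M(x + β_ℓ h⊙V)) ∏_{k∈u} V_k/(h_k σ²)]
  ≤ 3^{|u|} M_{r*+1}² (∑_ℓ |C_ℓ β_ℓ^{r*+1}|)² ξ^{-2(|u|-r*-1)} (∏_{k∈u} h_k⁻²)
    ‖h‖^{2(r*+1)}`. -/
theorem variance_bound_uniform
    {Ω : Type*} [MeasurableSpace Ω] (μ : Measure Ω) [IsProbabilityMeasure μ]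
    {d : ℕ} (M : EuclideanSpace ℝ (Fin d) → ℝ)
    (D : (Fin d → ℕ) → EuclideanSpace ℝ (Fin d) → ℝ)
    (r' : ℕ) (Mr : ℝ)
    (hHolder : ∀ x y : EuclideanSpace ℝ (Fin d),
      |M x - ∑ p ∈ Finset.range (r' + 1), ∑ iv ∈ Finset.piAntidiag Finset.univ p,
          D iv y * (∏ k, (x k - y k) ^ iv k) / ∏ k, (Nat.factorial (iv k) : ℝ)|
        ≤ Mr * ‖x - y‖ ^ (r' + 1))
    {L : ℕ} (C β : Fin L → ℝ)
    (hconstr : ∀ r ≤ r', ∑ ℓ, C ℓ * β ℓ ^ r = 0)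
    (ξ : ℝ) (hξ : 0 < ξ) (V : Fin d → Ω → ℝ)
    (hVmeas : ∀ j, Measurable (V j))
    (hindep : iIndepFun V μ)
    (hunif : ∀ j, Measure.map (V j) μ =
      (ENNReal.ofReal (2 * ξ))⁻¹ • volume.restrict (Set.Ioo (-ξ) ξ))
    (h : EuclideanSpace ℝ (Fin d)) (hh : ∀ k, 0 < h k)
    (u : Finset (Fin d)) (hu : u.Nonempty)
    (x : EuclideanSpace ℝ (Fin d)) :
    variance (fun ω =>
        (∑ ℓ, C ℓ * M (x + β ℓ • (WithLp.equiv 2 (Fin d → ℝ)).symm fun k => h k * V k ω))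
          * ∏ k ∈ u, V k ω / (h k * (ξ ^ 2 / 3))) μ
      ≤ (3 : ℝ) ^ u.card * Mr ^ 2 * (∑ ℓ, |C ℓ * β ℓ ^ (r' + 1)|) ^ 2
        * ξ ^ (-(2 * ((u.card : ℤ) - r' - 1)))
        * (∏ k ∈ u, (h k) ^ (-2 : ℤ)) * ‖h‖ ^ (2 * (r' + 1)) :=
  variance_bound_uniform_general μ M D r' Mr hHolder C β hconstr ξ hξ V hVmeas hindep hunif h u x
end
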